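/- There exists a fair division instance with 3 agents, all of whom have supermodular valuations with nonnegative value on the grand bundle, for which no EQ1 allocation exists. Concretely: with M = {1,2,3,4,5}, valuations v_1(S) = v_2(S) = 0 if S = ∅ and 2|S| − 5 otherwise, and v_3(S) = |S|, no allocation (A_1, A_2, A_3) partitioning M is EQ1. -/

import Mathlib

def EQ1 {ι α : Type*} [DecidableEq α] (v : ι → Finset α → ℝ) (A : ι → Finset α) : Prop :=
  ∀ i j, v i (A i) < v j (A j) →
    (∃ g ∈ A j, v i (A i) ≥ v j (A j \ {g})) ∨
    (∃ c ∈ A i, v i (A i \ {c}) ≥ v j (A j))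

def IsPartition {ι α : Type*} (A : ι → Finset α) : Prop :=
  ∀ x : α, ∃! i, x ∈ A i

def Supermodular {α : Type*} [DecidableEq α] (f : Finset α → ℝ) : Prop :=
  ∀ S T : Finset α, S ⊆ T → ∀ e ∉ T, f (insert e S) - f S ≤ f (insert e T) - f T

/-- Valuation of agents 1 and 2: `0` on `∅`, and `2|S| - 5` otherwise. -/
noncomputable def v12 : Finset (Fin 5) → ℝ :=
  fun S => if S = ∅ then 0 else 2 * S.card - 5

/-- Valuation of agent 3: cardinality. -/
def vcard : Finset (Fin 5) → ℝ := fun S => S.card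

noncomputable def vAll : Fin 3 → Finset (Fin 5) → ℝ := ![v12, v12, vcard]

/-!
Every valuation of the instance depends only on the size of the bundle, so whether an
allocation is EQ1 depends only on the bundle sizes `(a, b, c)` with `a + b + c = 5`. Agents 1
and 2 value `k` items at `0, -3, -1, 1, 3, 5` for `k = 0, …, 5`, agent 3 at `k`; for each of the
21 size profiles some pair of agents violates EQ1, which is a finite check.
-/

open Finset

/-- `w i k` is agent `i`'s value for any `k`-item bundle and `n i` the size of agent `i`'s bundle. -/
def CardEQ1 {ι : Type*} (w : ι → ℕ → ℤ) (n : ι → ℕ) : Prop :=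
  ∀ i j, w i (n i) < w j (n j) →
    (n j ≠ 0 ∧ w j (n j - 1) ≤ w i (n i)) ∨ (n i ≠ 0 ∧ w j (n j) ≤ w i (n i - 1))

instance {ι : Type*} [Fintype ι] [DecidableEq ι] (w : ι → ℕ → ℤ) (n : ι → ℕ) :
    Decidable (CardEQ1 w n) := by
  unfold CardEQ1; infer_instance

theorem EQ1.cardEQ1 {ι α : Type*} [DecidableEq α] {v : ι → Finset α → ℝ} {w : ι → ℕ → ℤ}
    (hv : ∀ i S, v i S = w i #S) {A : ι → Finset α} (h : EQ1 v A) :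
    CardEQ1 w fun i => #(A i) := by
  intro i j hlt
  have hlt' : v i (A i) < v j (A j) := by rw [hv, hv]; exact_mod_cast hlt
  rcases h i j hlt' with ⟨g, hg, hge⟩ | ⟨c, hc, hge⟩
  · rw [hv, hv, sdiff_singleton_eq_erase, card_erase_of_mem hg] at hge
    exact .inl ⟨card_ne_zero_of_mem hg, by exact_mod_cast hge⟩
  · rw [hv, hv, sdiff_singleton_eq_erase, card_erase_of_mem hc] at hge
    exact .inr ⟨card_ne_zero_of_mem hc, by exact_mod_cast hge⟩

theorem IsPartition.sum_card {ι α : Type*} [Fintype ι] [Fintype α] {A : ι → Finset α}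
    (hA : IsPartition A) : ∑ i, #(A i) = Fintype.card α := by
  classical
  have hdisj : ((univ : Finset ι) : Set ι).PairwiseDisjoint A := fun i _ j _ hij =>
    disjoint_left.mpr fun x hi hj => hij ((hA x).unique hi hj)
  have hcover : univ.biUnion A = univ :=
    eq_univ_of_forall fun x => mem_biUnion.mpr ⟨_, mem_univ _, (hA x).exists.choose_spec⟩
  rw [← card_biUnion hdisj, hcover, card_univ]

theorem supermodular_of_monotone_marginal {α : Type*} [DecidableEq α] {g : ℕ → ℝ}
    (hg : Monotone fun n => g (n + 1) - g n) : Supermodular fun S : Finset α => g #S := by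
  intro S T hST e heT
  dsimp only
  rw [card_insert_of_notMem heT, card_insert_of_notMem fun heS => heT (hST heS)]
  exact hg (card_le_card hST)

def w12 (n : ℕ) : ℤ := if n = 0 then 0 else 2 * n - 5

def wAll : Fin 3 → ℕ → ℤ := ![w12, w12, Nat.cast]

theorem vAll_eq_wAll (i : Fin 3) (S : Finset (Fin 5)) : vAll i S = wAll i #S := by
  fin_cases i <;> simp [vAll, wAll, v12, w12, vcard, ← card_eq_zero, apply_ite (Int.cast : ℤ → ℝ)]

theorem monotone_wAll_marginal (i : Fin 3) : Monotone fun n => wAll i (n + 1) - wAll i n := by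
  refine monotone_nat_of_le_succ fun n => ?_
  fin_cases i <;> rcases n with _ | n <;> simp [wAll, w12] <;> omega

theorem vAll_supermodular (i : Fin 3) : Supermodular (vAll i) := by
  have hg : Monotone fun n => ((wAll i (n + 1) : ℤ) : ℝ) - ((wAll i n : ℤ) : ℝ) :=
    fun m n hmn => by dsimp only; exact_mod_cast monotone_wAll_marginal i hmn
  rw [show vAll i = fun S => (wAll i #S : ℝ) from funext (vAll_eq_wAll i)]
  exact supermodular_of_monotone_marginal (g := fun n => (wAll i n : ℝ)) hg

theorem not_cardEQ1_wAll_of_lt :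
    ∀ a < 6, ∀ b < 6, ∀ c < 6, a + b + c = 5 → ¬ CardEQ1 wAll ![a, b, c] := by
  decide

theorem not_cardEQ1_wAll {n : Fin 3 → ℕ} (hn : ∑ i, n i = 5) : ¬ CardEQ1 wAll n := by
  rw [Fin.sum_univ_three] at hn
  convert not_cardEQ1_wAll_of_lt (n 0) (by omega) (n 1) (by omega) (n 2) (by omega) hn
  ext i; fin_cases i <;> rfl

/-- A concrete 3-agent instance on 5 items with supermodular valuations, each
valuing the grand bundle nonnegatively, in which no allocation is EQ1. -/
theorem no_eq1_instance :
    (∀ i, Supermodular (vAll i)) ∧ (∀ i, 0 ≤ vAll i Finset.univ) ∧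
    ∀ A : Fin 3 → Finset (Fin 5), IsPartition A → ¬ EQ1 vAll A := by
  refine ⟨vAll_supermodular, fun i => ?_, fun A hA hEQ => ?_⟩
  · rw [vAll_eq_wAll]
    exact_mod_cast (by decide : ∀ i, 0 ≤ wAll i 5) i
  · exact not_cardEQ1_wAll (by simpa using hA.sum_card) (hEQ.cardEQ1 vAll_eq_wAll)
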